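/- Let F be an anonymous voting method. For any majoritarian (resp. homogeneously pairwise) universal axiom Ax: if F satisfies Ax, then the majoritarian projection F_{maj,Y} (resp. the pairwise projection F_{pair,Y,m}) satisfies Ax, for any finite Y ⊆ 𝒳 and m ∈ ℤ⁺. -/

import Mathlib

/- Formalization of the profile representation of (weighted) weak tournaments from
Holliday, Norman, Pacuit, Zahedian, "Impossibility theorems involving weakenings of
expansion consistency and resoluteness in voting". Candidates form an infinite
type `C`. -/

open Classical

noncomputable section

/-- `L` is a strict linear order on exactly the finite set `s`. -/
def IsStrictLinearOrderOn {C : Type} (s : Finset C) (L : C → C → Prop) : Prop :=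
  (∀ x, ¬ L x x) ∧ (∀ x y z, L x y → L y z → L x z) ∧
    (∀ x ∈ s, ∀ y ∈ s, x ≠ y → L x y ∨ L y x) ∧ ∀ x y, L x y → x ∈ s ∧ y ∈ s

/-- Restriction of a relation to a finite set `A`. -/
def restrictRel {C : Type} (A : Finset C) (L : C → C → Prop) : C → C → Prop :=
  fun x y => L x y ∧ x ∈ A ∧ y ∈ A

theorem IsStrictLinearOrderOn.restrict {C : Type} {s A : Finset C} {L : C → C → Prop}
    (h : IsStrictLinearOrderOn s L) (hA : A ⊆ s) :
    IsStrictLinearOrderOn A (restrictRel A L) := by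
  obtain ⟨hirr, htr, htot, hdom⟩ := h
  refine ⟨fun x hx => hirr x hx.1,
    fun x y z hxy hyz => ⟨htr _ _ _ hxy.1 hyz.1, hxy.2.1, hyz.2.2⟩, ?_,
    fun x y hxy => ⟨hxy.2.1, hxy.2.2⟩⟩
  intro x hx y hy hne
  rcases htot x (hA hx) y (hA hy) hne with h' | h'
  · exact Or.inl ⟨h', hx, hy⟩
  · exact Or.inr ⟨h', hy, hx⟩

/-- The image of a relation under the transposition of `a` and `b`:
`(x, y) ∈ swapRel a b L` iff `(π x, π y) ∈ L` where `π` swaps `a` and `b`. -/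
def swapRel {C : Type} (a b : C) (L : C → C → Prop) : C → C → Prop :=
  fun x y => L (Equiv.swap a b x) (Equiv.swap a b y)

theorem IsStrictLinearOrderOn.swapRel_mem {C : Type} {s : Finset C} {L : C → C → Prop}
    (a b : C) (h : IsStrictLinearOrderOn s L) :
    IsStrictLinearOrderOn (s.image (Equiv.swap a b)) (swapRel a b L) := by
  obtain ⟨hirr, htr, htot, hdom⟩ := h
  refine ⟨fun x => hirr _, fun x y z hxy hyz => htr _ _ _ hxy hyz, ?_, ?_⟩
  · intro x hx y hy hne
    obtain ⟨x', hx', rfl⟩ := Finset.mem_image.mp hx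
    obtain ⟨y', hy', rfl⟩ := Finset.mem_image.mp hy
    have hne' : x' ≠ y' := by rintro rfl; exact hne rfl
    have := htot x' hx' y' hy' hne'
    simpa [swapRel, Equiv.swap_apply_self] using this
  · intro x y hxy
    obtain ⟨h1, h2⟩ := hdom _ _ hxy
    exact ⟨Finset.mem_image.mpr ⟨_, h1, Equiv.swap_apply_self a b x⟩,
      Finset.mem_image.mpr ⟨_, h2, Equiv.swap_apply_self a b y⟩⟩

theorem IsStrictLinearOrderOn.of_swapRel {C : Type} {s : Finset C} {L : C → C → Prop}
    {a b : C} (h : IsStrictLinearOrderOn s (swapRel a b L)) :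
    IsStrictLinearOrderOn (s.image (Equiv.swap a b)) L := by
  have h2 := h.swapRel_mem a b
  have heq : swapRel a b (swapRel a b L) = L := by
    funext x y
    simp [swapRel, Equiv.swap_apply_self]
  rwa [heq] at h2

/-- A generalized anonymous profile: an integer-valued function on the strict linear
orders of a finite nonempty set of candidates (encoded as a function on all
relations, supported on the strict linear orders of `cands`). -/
structure GAProfile (C : Type) where
  cands : Finset C
  cands_nonempty : cands.Nonempty
  count : (C → C → Prop) → ℤ
  count_supp : ∀ L, count L ≠ 0 → IsStrictLinearOrderOn cands L

namespace GAProfile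

variable {C : Type}

/-- `P` is an anonymous profile: all ballot counts are nonnegative. -/
def IsAnon (P : GAProfile C) : Prop := ∀ L, 0 ≤ P.count L

/-- The margin `μ_{x,y}(P)` of `x` over `y` in `P`. -/
def margin (P : GAProfile C) (x y : C) : ℤ :=
  (∑ᶠ L : C → C → Prop, if L x y then P.count L else 0) -
    ∑ᶠ L : C → C → Prop, if L y x then P.count L else 0

theorem margin_neg (P : GAProfile C) (x y : C) : P.margin y x = - P.margin x y := by
  simp only [margin]
  ring

/-- The restriction `P|_Z` of a generalized anonymous profile to a nonempty subset
`Z` of its candidates. -/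
def restrict (P : GAProfile C) (Z : Finset C) (hZ : Z.Nonempty) (hsub : Z ⊆ P.cands) :
    GAProfile C where
  cands := Z
  cands_nonempty := hZ
  count := fun L => ∑ᶠ L' : C → C → Prop, if restrictRel Z L' = L then P.count L' else 0
  count_supp := by
    intro L hL
    by_contra hnot
    apply hL
    apply finsum_eq_zero_of_forall_eq_zero
    intro L'
    split_ifs with h
    · by_contra hc
      exact hnot (h ▸ ((P.count_supp L' hc).restrict hsub))
    · rfl

/-- The profile `P_{a⇄b}` obtained by transposing the candidates `a` and `b`. -/
def swapCands (P : GAProfile C) (a b : C) : GAProfile C where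
  cands := P.cands.image (Equiv.swap a b)
  cands_nonempty := P.cands_nonempty.image _
  count := fun L => P.count (swapRel a b L)
  count_supp := fun L h => (P.count_supp _ h).of_swapRel

end GAProfile

/-- A weak tournament: an asymmetric directed graph on a finite nonempty set of
vertices. -/
structure WeakTournament (C : Type) where
  verts : Finset C
  verts_nonempty : verts.Nonempty
  edge : C → C → Prop
  edge_asymm : ∀ x y, edge x y → ¬ edge y x
  edge_dom : ∀ x y, edge x y → x ∈ verts ∧ y ∈ verts

/-- A weighted weak tournament: a weak tournament together with a positive integer
weight on each edge (normalized to weight `0` off the edges). -/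
structure WeightedWeakTournament (C : Type) where
  verts : Finset C
  verts_nonempty : verts.Nonempty
  edge : C → C → Prop
  edge_asymm : ∀ x y, edge x y → ¬ edge y x
  edge_dom : ∀ x y, edge x y → x ∈ verts ∧ y ∈ verts
  wt : C → C → ℤ
  wt_pos : ∀ x y, edge x y → 0 < wt x y
  wt_eq_zero : ∀ x y, ¬ edge x y → wt x y = 0

namespace GAProfile

variable {C : Type}

/-- The majority graph `M(P)` of a generalized anonymous profile. -/
def maj (P : GAProfile C) : WeakTournament C where
  verts := P.cands
  verts_nonempty := P.cands_nonempty
  edge := fun x y => 0 < P.margin x y ∧ x ∈ P.cands ∧ y ∈ P.cands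
  edge_asymm := by
    intro x y h h'
    have hneg := P.margin_neg x y
    have h1 := h.1
    have h2 := h'.1
    omega
  edge_dom := fun x y h => ⟨h.2.1, h.2.2⟩

/-- The margin graph `ℳ(P)` of a generalized anonymous profile. -/
def marg (P : GAProfile C) : WeightedWeakTournament C where
  verts := P.cands
  verts_nonempty := P.cands_nonempty
  edge := fun x y => 0 < P.margin x y ∧ x ∈ P.cands ∧ y ∈ P.cands
  edge_asymm := by
    intro x y h h'
    have hneg := P.margin_neg x y
    have h1 := h.1
    have h2 := h'.1
    omega
  edge_dom := fun x y h => ⟨h.2.1, h.2.2⟩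
  wt := fun x y =>
    if 0 < P.margin x y ∧ x ∈ P.cands ∧ y ∈ P.cands then P.margin x y else 0
  wt_pos := by
    intro x y h
    show 0 < if 0 < P.margin x y ∧ x ∈ P.cands ∧ y ∈ P.cands then P.margin x y else 0
    rw [if_pos h]
    exact h.1
  wt_eq_zero := by
    intro x y h
    show (if 0 < P.margin x y ∧ x ∈ P.cands ∧ y ∈ P.cands then P.margin x y else 0) = 0
    exact if_neg h

end GAProfile

/-- The number `ψ_Y = 2 (|Y| − 2)!`. -/
def psi {C : Type} (Y : Finset C) : ℤ := 2 * ((Y.card - 2).factorial : ℤ)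

theorem psi_pos {C : Type} (Y : Finset C) : 0 < psi Y := by
  have h := Nat.factorial_pos (Y.card - 2)
  simp only [psi]
  omega

/-- The count function of the profile `𝐋_Y` consisting of one copy of each linear
order of `Y`. -/
def allOrdersCount {C : Type} (Y : Finset C) (L : C → C → Prop) : ℤ :=
  if IsStrictLinearOrderOn Y L then 1 else 0

/-- `L` ranks `a` first and `b` second among the candidates in `Y`. -/
def firstSecond {C : Type} (Y : Finset C) (a b : C) (L : C → C → Prop) : Prop :=
  (∀ z ∈ Y, z ≠ a → L a z) ∧ ∀ z ∈ Y, z ≠ a → z ≠ b → L b z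

/-- The count function of the `ab`-`Y`-block `𝐋_{ab-Y}`: one copy of each linear
order of `Y` with `a` first and `b` second. -/
def blockCount {C : Type} (Y : Finset C) (a b : C) (L : C → C → Prop) : ℤ :=
  if IsStrictLinearOrderOn Y L ∧ firstSecond Y a b L then 1 else 0

/-- The count function of the profile
`𝔏_Y(T) = 𝐋_Y + Σ_{a→b in T} (𝐋_{ab-Y} − 𝐋_{ba-Y})`. -/
def bigLCount {C : Type} (Y : Finset C) (T : WeakTournament C) : (C → C → Prop) → ℤ :=
  fun L => allOrdersCount Y L +
    ∑ p ∈ T.verts ×ˢ T.verts,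
      (if T.edge p.1 p.2 then blockCount Y p.1 p.2 L - blockCount Y p.2 p.1 L else 0)

/-- The profile `𝔏_Y(T)`. -/
def bigL {C : Type} (Y : Finset C) (T : WeakTournament C) (hsub : T.verts ⊆ Y) :
    GAProfile C where
  cands := Y
  cands_nonempty := by
    obtain ⟨x, hx⟩ := T.verts_nonempty
    exact ⟨x, hsub hx⟩
  count := bigLCount Y T
  count_supp := by
    intro L hL
    by_contra h
    apply hL
    have hb : ∀ a b : C, blockCount Y a b L = 0 := by
      intro a b
      exact if_neg (by exact fun hc => h hc.1)
    simp only [bigLCount, allOrdersCount, if_neg h, zero_add]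
    refine Finset.sum_eq_zero fun p _ => ?_
    rw [hb, hb, sub_self]
    split <;> rfl

/-- The profile representation `𝔓_Y(T) = 𝔏_Y(T)|_{X(T)}` of a weak tournament `T`
relative to `Y`. -/
def profileRep {C : Type} (Y : Finset C) (T : WeakTournament C) (hsub : T.verts ⊆ Y) :
    GAProfile C :=
  (bigL Y T hsub).restrict T.verts T.verts_nonempty hsub

/-- The count function of the profile
`𝔏_{Y,m}(𝒯) = m𝐋_Y + Σ_{a→b in 𝒯 with weight kψ_Y} (k𝐋_{ab-Y} − k𝐋_{ba-Y})`. -/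
def bigLWCount {C : Type} (Y : Finset C) (m : ℕ) (T : WeightedWeakTournament C) :
    (C → C → Prop) → ℤ :=
  fun L => (m : ℤ) * allOrdersCount Y L +
    ∑ p ∈ T.verts ×ˢ T.verts,
      (if T.edge p.1 p.2 then
        (T.wt p.1 p.2 / psi Y) * (blockCount Y p.1 p.2 L - blockCount Y p.2 p.1 L)
      else 0)

/-- The profile `𝔏_{Y,m}(𝒯)`. -/
def bigLW {C : Type} (Y : Finset C) (m : ℕ) (T : WeightedWeakTournament C)
    (hsub : T.verts ⊆ Y) : GAProfile C where
  cands := Y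
  cands_nonempty := by
    obtain ⟨x, hx⟩ := T.verts_nonempty
    exact ⟨x, hsub hx⟩
  count := bigLWCount Y m T
  count_supp := by
    intro L hL
    by_contra h
    apply hL
    have hb : ∀ a b : C, blockCount Y a b L = 0 := by
      intro a b
      exact if_neg (by exact fun hc => h hc.1)
    simp only [bigLWCount, allOrdersCount, if_neg h, mul_zero, zero_add]
    refine Finset.sum_eq_zero fun p _ => ?_
    rw [hb, hb, sub_self, mul_zero]
    split <;> rfl

/-- The profile representation `𝔓_{Y,m}(𝒯) = 𝔏_{Y,m}(𝒯)|_{X(𝒯)}` of a weighted weak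
tournament `𝒯` relative to `Y` and `m`. -/
def profileRepW {C : Type} (Y : Finset C) (m : ℕ) (T : WeightedWeakTournament C)
    (hsub : T.verts ⊆ Y) : GAProfile C :=
  (bigLW Y m T hsub).restrict T.verts T.verts_nonempty hsub

/-- Membership in `𝕎𝕋^w_{Y,m}`: a weighted weak tournament on vertices included in
`Y`, each of whose weights is `kψ_Y` for some positive `k ≤ m`. -/
def MemWTw {C : Type} (Y : Finset C) (m : ℕ) (T : WeightedWeakTournament C) : Prop :=
  T.verts ⊆ Y ∧
    ∀ a b, T.edge a b → ∃ k : ℕ, 0 < k ∧ k ≤ m ∧ T.wt a b = (k : ℤ) * psi Y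

/-- The weighted weak tournament obtained by multiplying all weights by `n > 0`. -/
def WeightedWeakTournament.scale {C : Type} (n : ℤ) (hn : 0 < n)
    (T : WeightedWeakTournament C) : WeightedWeakTournament C where
  verts := T.verts
  verts_nonempty := T.verts_nonempty
  edge := T.edge
  edge_asymm := T.edge_asymm
  edge_dom := T.edge_dom
  wt := fun x y => n * T.wt x y
  wt_pos := fun x y h => mul_pos hn (T.wt_pos x y h)
  wt_eq_zero := fun x y h => by
    show n * T.wt x y = 0
    rw [T.wt_eq_zero x y h, mul_zero]

/-- An anonymous voting method: a function on a set of anonymous profiles assigning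
to each profile in its domain a nonempty set of winners among its candidates. -/
structure AnonVotingMethod (C : Type) where
  dom : Set (GAProfile C)
  dom_anon : ∀ P ∈ dom, P.IsAnon
  winners : GAProfile C → Finset C
  winners_nonempty : ∀ P ∈ dom, (winners P).Nonempty
  winners_sub : ∀ P ∈ dom, winners P ⊆ P.cands

namespace AnonVotingMethod

variable {C : Type}

/-- Majoritarianism: the winners depend only on the majority graph. -/
def Majoritarian (F : AnonVotingMethod C) : Prop :=
  ∀ P ∈ F.dom, ∀ P' ∈ F.dom, P.maj = P'.maj → F.winners P = F.winners P'

/-- Pairwiseness: the winners depend only on the margin graph. -/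
def Pairwise (F : AnonVotingMethod C) : Prop :=
  ∀ P ∈ F.dom, ∀ P' ∈ F.dom, P.marg = P'.marg → F.winners P = F.winners P'

/-- Neutrality: transposing two candidates transposes the winners accordingly. -/
def Neutral (F : AnonVotingMethod C) : Prop :=
  ∀ P ∈ F.dom, ∀ a b : C, P.swapCands a b ∈ F.dom →
    F.winners (P.swapCands a b) = (F.winners P).image (Equiv.swap a b)

end AnonVotingMethod

/-- The majoritarian projection `F_{maj,Y}` of an anonymous voting method `F`:
its domain consists of the anonymous profiles `P` with `X(P) ⊆ Y` and
`𝔓_Y(M(P)) ∈ dom(F)`, and `F_{maj,Y}(P) = F(𝔓_Y(M(P)))`. -/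
def majProj {C : Type} (F : AnonVotingMethod C) (Y : Finset C) : AnonVotingMethod C where
  dom := {P | P.IsAnon ∧ ∃ h : P.maj.verts ⊆ Y, profileRep Y P.maj h ∈ F.dom}
  dom_anon := fun _ hP => hP.1
  winners := fun P =>
    if h : P.maj.verts ⊆ Y then F.winners (profileRep Y P.maj h) else P.cands
  winners_nonempty := by
    rintro P ⟨hA, h, hd⟩
    show (if h : P.maj.verts ⊆ Y then
      F.winners (profileRep Y P.maj h) else P.cands).Nonempty
    rw [dif_pos h]
    exact F.winners_nonempty _ hd
  winners_sub := by
    rintro P ⟨hA, h, hd⟩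
    show (if h : P.maj.verts ⊆ Y then
      F.winners (profileRep Y P.maj h) else P.cands) ⊆ P.cands
    rw [dif_pos h]
    exact F.winners_sub _ hd

/-- The pairwise projection `F_{pair,Y,m}` of an anonymous voting method `F`:
its domain consists of the anonymous profiles `P` with `X(P) ⊆ Y`, all weights in
`ℳ(P)` at most `m`, and `𝔓_{Y,m}(ψℳ(P)) ∈ dom(F)`, and
`F_{pair,Y,m}(P) = F(𝔓_{Y,m}(ψℳ(P)))`. -/
def pairProj {C : Type} (F : AnonVotingMethod C) (Y : Finset C) (m : ℕ) :
    AnonVotingMethod C where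
  dom := {P | P.IsAnon ∧ (∀ x ∈ P.cands, ∀ y ∈ P.cands, P.margin x y ≤ (m : ℤ)) ∧
    ∃ h : (WeightedWeakTournament.scale (psi Y) (psi_pos Y) P.marg).verts ⊆ Y,
      profileRepW Y m (WeightedWeakTournament.scale (psi Y) (psi_pos Y) P.marg) h ∈ F.dom}
  dom_anon := fun _ hP => hP.1
  winners := fun P =>
    if h : (WeightedWeakTournament.scale (psi Y) (psi_pos Y) P.marg).verts ⊆ Y then
      F.winners
        (profileRepW Y m (WeightedWeakTournament.scale (psi Y) (psi_pos Y) P.marg) h)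
    else P.cands
  winners_nonempty := by
    rintro P ⟨hA, hw, h, hd⟩
    show (if h : (WeightedWeakTournament.scale (psi Y) (psi_pos Y) P.marg).verts ⊆ Y then
      F.winners
        (profileRepW Y m (WeightedWeakTournament.scale (psi Y) (psi_pos Y) P.marg) h)
      else P.cands).Nonempty
    rw [dif_pos h]
    exact F.winners_nonempty _ hd
  winners_sub := by
    rintro P ⟨hA, hw, h, hd⟩
    show (if h : (WeightedWeakTournament.scale (psi Y) (psi_pos Y) P.marg).verts ⊆ Y then
      F.winners
        (profileRepW Y m (WeightedWeakTournament.scale (psi Y) (psi_pos Y) P.marg) h)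
      else P.cands) ⊆ P.cands
    rw [dif_pos h]
    exact F.winners_sub _ hd

/-- `F` satisfies the `n`-ary universal axiom `Ax`: every `n`-tuple of pairs
`⟨P, F(P)⟩` with `P` in the domain of `F` belongs to `Ax`. -/
def AnonVotingMethod.Satisfies {C : Type} (F : AnonVotingMethod C) {n : ℕ}
    (Ax : Set (Fin n → GAProfile C × Finset C)) : Prop :=
  ∀ f : Fin n → GAProfile C × Finset C,
    (∀ i, (f i).1 ∈ F.dom ∧ (f i).2 = F.winners (f i).1) → f ∈ Ax

/-- `Ax` is a majoritarian universal axiom: membership is invariant under replacing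
the profiles by profiles with the same majority graphs. -/
def IsMajoritarianAx {C : Type} {n : ℕ} (Ax : Set (Fin n → GAProfile C × Finset C)) :
    Prop :=
  ∀ Pv Qv : Fin n → GAProfile C, (∀ i, (Pv i).maj = (Qv i).maj) →
    ∀ Xv : Fin n → Finset C, (∀ i, Xv i ⊆ (Pv i).cands) →
      ((fun i => (Pv i, Xv i)) ∈ Ax ↔ (fun i => (Qv i, Xv i)) ∈ Ax)

/-- `Ax` is a homogeneously pairwise universal axiom: membership is invariant under
replacing the profiles by profiles whose margin graphs are a common positive multiple
of the original margin graphs. -/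
def IsHomogeneouslyPairwiseAx {C : Type} {n : ℕ}
    (Ax : Set (Fin n → GAProfile C × Finset C)) : Prop :=
  ∀ Pv Qv : Fin n → GAProfile C, ∀ k : ℤ, ∀ hk : 0 < k,
    (∀ i, WeightedWeakTournament.scale k hk (Pv i).marg = (Qv i).marg) →
    ∀ Xv : Fin n → Finset C, (∀ i, Xv i ⊆ (Pv i).cands) →
      ((fun i => (Pv i, Xv i)) ∈ Ax ↔ (fun i => (Qv i, Xv i)) ∈ Ax)

/-- `Ax` is a variable candidate universal axiom: if the `Qᵢ` have the same candidate
sets as the `Pᵢ` and are related by restriction in all the ways the `Pᵢ` are, then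
acceptable choices for the `Qᵢ` are acceptable choices for the `Pᵢ`. -/
def IsVariableCandidateAx {C : Type} {n : ℕ}
    (Ax : Set (Fin n → GAProfile C × Finset C)) : Prop :=
  ∀ Pv Qv : Fin n → GAProfile C,
    (∀ i, (Pv i).cands = (Qv i).cands) →
    (∀ i j, ∀ h1 : (Pv i).cands ⊆ (Pv j).cands,
      Pv i = (Pv j).restrict (Pv i).cands (Pv i).cands_nonempty h1 →
      ∀ h2 : (Qv i).cands ⊆ (Qv j).cands,
        Qv i = (Qv j).restrict (Qv i).cands (Qv i).cands_nonempty h2) →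
    ∀ Xv : Fin n → Finset C, (∀ i, Xv i ⊆ (Pv i).cands) →
      (fun i => (Qv i, Xv i)) ∈ Ax → (fun i => (Pv i, Xv i)) ∈ Ax

/-! The projections feed `F` the profile `𝔓_Y(M(P))`, resp. `𝔓_{Y,m}(ψℳ(P))`. It has majority
graph `M(P)`, resp. margin graph `ψℳ(P)`, so a majoritarian, resp. homogeneously pairwise, axiom
cannot tell it apart from `P`. To compute its margins: margins are linear in the ballot counts and
unchanged by restriction; `𝐋_Y` has all margins zero (transposing `x` and `y` is a symmetry); and
`𝐋_{ab-Y} − 𝐋_{ba-Y}` has margin `ψ_Y = 2(|Y|−2)!` from `a` to `b` and zero on every other pair,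
since each block holds `(|Y|−2)!` ballots and on any other pair the two blocks either agree
unanimously or are balanced by a transposition. -/

section

variable {C : Type}

namespace IsStrictLinearOrderOn

variable {s : Finset C} {L : C → C → Prop}

theorem asymm (h : IsStrictLinearOrderOn s L) {x y : C} (hxy : L x y) : ¬ L y x :=
  fun hyx => h.1 x (h.2.1 _ _ _ hxy hyx)

theorem eq_of_forall_mem {L' : C → C → Prop} (h : IsStrictLinearOrderOn s L)
    (h' : IsStrictLinearOrderOn s L') (he : ∀ x ∈ s, ∀ y ∈ s, L x y ↔ L' x y) : L = L' := by
  funext x y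
  refine propext ⟨fun hxy => ?_, fun hxy => ?_⟩
  · exact (he x (h.2.2.2 x y hxy).1 y (h.2.2.2 x y hxy).2).mp hxy
  · exact (he x (h'.2.2.2 x y hxy).1 y (h'.2.2.2 x y hxy).2).mpr hxy

end IsStrictLinearOrderOn

theorem setOf_isStrictLinearOrderOn_finite (s : Finset C) :
    {L : C → C → Prop | IsStrictLinearOrderOn s L}.Finite := by
  refine Set.Finite.of_finite_image (f := fun L (a b : s) => L a b) (Set.toFinite _) ?_
  intro L hL L' hL' he
  exact hL.eq_of_forall_mem hL' fun x hx y hy => iff_of_eq (congrFun₂ he ⟨x, hx⟩ ⟨y, hy⟩)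

def linearOrders (s : Finset C) : Finset (C → C → Prop) :=
  (setOf_isStrictLinearOrderOn_finite s).toFinset

@[simp]
theorem mem_linearOrders {s : Finset C} {L : C → C → Prop} :
    L ∈ linearOrders s ↔ IsStrictLinearOrderOn s L :=
  Set.Finite.mem_toFinset _

theorem swap_mem_iff {s : Finset C} {a b : C} (ha : a ∈ s) (hb : b ∈ s) (z : C) :
    Equiv.swap a b z ∈ s ↔ z ∈ s := by
  rw [Equiv.swap_apply_def]
  split_ifs with h₁ h₂
  · simp only [h₁, ha, hb]
  · simp only [h₂, ha, hb]
  · rfl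

theorem image_swap_eq {s : Finset C} {a b : C} (ha : a ∈ s) (hb : b ∈ s) :
    s.image (Equiv.swap a b) = s := by
  ext z
  rw [Finset.mem_image]
  exact ⟨fun ⟨w, hw, hwz⟩ => hwz ▸ (swap_mem_iff ha hb w).mpr hw,
    fun hz => ⟨_, (swap_mem_iff ha hb z).mpr hz, Equiv.swap_apply_self a b z⟩⟩

theorem swapRel_swapRel (a b : C) (L : C → C → Prop) : swapRel a b (swapRel a b L) = L := by
  funext x y
  simp only [swapRel, Equiv.swap_apply_self]

theorem isStrictLinearOrderOn_swapRel_iff {s : Finset C} {a b : C} (ha : a ∈ s) (hb : b ∈ s)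
    {L : C → C → Prop} :
    IsStrictLinearOrderOn s (swapRel a b L) ↔ IsStrictLinearOrderOn s L := by
  constructor
  · intro h
    simpa only [image_swap_eq ha hb] using h.of_swapRel
  · intro h
    simpa only [image_swap_eq ha hb] using h.swapRel_mem a b

theorem sum_linearOrders_swapRel {s : Finset C} {a b : C} (ha : a ∈ s) (hb : b ∈ s)
    (g : (C → C → Prop) → ℤ) :
    ∑ L ∈ linearOrders s, g (swapRel a b L) = ∑ L ∈ linearOrders s, g L := by
  refine Finset.sum_nbij' (swapRel a b) (swapRel a b) ?_ ?_ ?_ ?_ fun _ _ => rfl <;>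
    intro L hL
  · simpa [isStrictLinearOrderOn_swapRel_iff ha hb] using hL
  · simpa [isStrictLinearOrderOn_swapRel_iff ha hb] using hL
  · exact swapRel_swapRel a b L
  · exact swapRel_swapRel a b L

def RanksFirst (s : Finset C) (t : C) (L : C → C → Prop) : Prop := ∀ z ∈ s, z ≠ t → L t z

theorem IsStrictLinearOrderOn.exists_ranksFirst {s : Finset C} {L : C → C → Prop}
    (hL : IsStrictLinearOrderOn s L) (hs : s.Nonempty) : ∃ t ∈ s, RanksFirst s t L := by
  -- a minimal element for `L` on the finite set `s` has nothing ranked above it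
  let r : s → s → Prop := fun a b => L a b
  have : IsTrans s r := ⟨fun a b c => hL.2.1 a b c⟩
  have : Std.Irrefl r := ⟨fun a => hL.1 a⟩
  obtain ⟨x, hx⟩ := hs
  obtain ⟨t, -, ht⟩ :=
    (Finite.wellFounded_of_trans_of_irrefl r).has_min Set.univ ⟨⟨x, hx⟩, trivial⟩
  refine ⟨t, t.2, fun z hz hzt => ?_⟩
  exact (hL.2.2.1 t t.2 z hz (Ne.symm hzt)).resolve_right (ht ⟨z, hz⟩ trivial)

def putOnTop (s : Finset C) (t : C) (L : C → C → Prop) : C → C → Prop :=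
  fun x y => (x = t ∧ y ∈ s ∧ y ≠ t) ∨ L x y

section putOnTop

variable {s : Finset C} {t : C} {L : C → C → Prop}

theorem IsStrictLinearOrderOn.putOnTop (ht : t ∈ s)
    (hL : IsStrictLinearOrderOn (s.erase t) L) : IsStrictLinearOrderOn s (putOnTop s t L) := by
  obtain ⟨hirr, htr, htot, hdom⟩ := hL
  have hne_top : ∀ x y, L x y → y ≠ t := fun x y h => (Finset.mem_erase.mp (hdom x y h).2).1
  refine ⟨?_, ?_, ?_, ?_⟩
  · rintro x (⟨rfl, _, hne⟩ | hx)
    exacts [hne rfl, hirr x hx]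
  · rintro x y z (⟨rfl, hy, hyt⟩ | hxy) (⟨rfl, hz, hzt⟩ | hyz)
    · exact absurd rfl hyt
    · exact Or.inl ⟨rfl, Finset.mem_of_mem_erase (hdom _ _ hyz).2, hne_top _ _ hyz⟩
    · exact absurd rfl (hne_top _ _ hxy)
    · exact Or.inr (htr _ _ _ hxy hyz)
  · intro x hx y hy hxy
    by_cases hxt : x = t
    · exact Or.inl (Or.inl ⟨hxt, hy, hxt ▸ hxy.symm⟩)
    by_cases hyt : y = t
    · exact Or.inr (Or.inl ⟨hyt, hx, hyt ▸ hxy⟩)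
    rcases htot x (Finset.mem_erase.mpr ⟨hxt, hx⟩) y (Finset.mem_erase.mpr ⟨hyt, hy⟩) hxy
      with h | h
    exacts [Or.inl (Or.inr h), Or.inr (Or.inr h)]
  · rintro x y (⟨rfl, hy, _⟩ | hxy)
    exacts [⟨ht, hy⟩, ⟨Finset.mem_of_mem_erase (hdom _ _ hxy).1,
      Finset.mem_of_mem_erase (hdom _ _ hxy).2⟩]

theorem ranksFirst_putOnTop : RanksFirst s t (putOnTop s t L) :=
  fun _ hz hzt => Or.inl ⟨rfl, hz, hzt⟩

theorem restrictRel_putOnTop (hL : IsStrictLinearOrderOn (s.erase t) L) :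
    restrictRel (s.erase t) (putOnTop s t L) = L := by
  funext x y
  refine propext ⟨?_, fun hxy => ⟨Or.inr hxy, hL.2.2.2 x y hxy⟩⟩
  rintro ⟨⟨rfl, -⟩ | hxy, hx, -⟩
  exacts [absurd rfl (Finset.mem_erase.mp hx).1, hxy]

theorem putOnTop_restrictRel (hL : IsStrictLinearOrderOn s L) (htop : RanksFirst s t L) :
    putOnTop s t (restrictRel (s.erase t) L) = L := by
  funext x y
  refine propext ⟨?_, fun hxy => ?_⟩
  · rintro (⟨rfl, hy, hyt⟩ | ⟨hxy, -⟩)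
    exacts [htop y hy hyt, hxy]
  obtain ⟨hx, hy⟩ := hL.2.2.2 x y hxy
  by_cases hxt : x = t
  · exact Or.inl ⟨hxt, hy, fun hyt => hL.1 x (by rwa [hyt, ← hxt] at hxy)⟩
  have hyt : y ≠ t := by
    rintro rfl
    exact hL.asymm hxy (htop x hx hxt)
  exact Or.inr ⟨hxy, Finset.mem_erase.mpr ⟨hxt, hx⟩, Finset.mem_erase.mpr ⟨hyt, hy⟩⟩

end putOnTop

theorem card_filter_ranksFirst_and (s : Finset C) {t : C} (ht : t ∈ s)
    (Q : (C → C → Prop) → Prop) :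
    ((linearOrders s).filter fun L => RanksFirst s t L ∧ Q (restrictRel (s.erase t) L)).card =
      ((linearOrders (s.erase t)).filter Q).card := by
  refine Finset.card_bij' (fun L _ => restrictRel (s.erase t) L) (fun L _ => putOnTop s t L)
    ?_ ?_ ?_ ?_
  · intro L hL
    simp only [Finset.mem_filter, mem_linearOrders] at hL ⊢
    exact ⟨hL.1.restrict (Finset.erase_subset t s), hL.2.2⟩
  · intro L hL
    simp only [Finset.mem_filter, mem_linearOrders] at hL ⊢
    exact ⟨hL.1.putOnTop ht, ranksFirst_putOnTop, (restrictRel_putOnTop hL.1).symm ▸ hL.2⟩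
  · intro L hL
    simp only [Finset.mem_filter, mem_linearOrders] at hL
    exact putOnTop_restrictRel hL.1 hL.2.1
  · intro L hL
    simp only [Finset.mem_filter, mem_linearOrders] at hL
    exact restrictRel_putOnTop hL.1

theorem linearOrders_empty : linearOrders (∅ : Finset C) = {fun _ _ => False} := by
  ext L
  rw [mem_linearOrders, Finset.mem_singleton]
  constructor
  · intro h
    funext x y
    exact propext (iff_false_intro fun hxy => Finset.notMem_empty x (h.2.2.2 x y hxy).1)
  · rintro rfl
    exact ⟨fun _ h => h, fun _ _ _ h => h.elim, fun x hx => absurd hx (Finset.notMem_empty x),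
      fun _ _ h => h.elim⟩

theorem card_linearOrders (s : Finset C) : (linearOrders s).card = s.card.factorial := by
  induction h : s.card generalizing s with
  | zero => simp [Finset.card_eq_zero.mp h, linearOrders_empty]
  | succ k ih =>
    have hcover : linearOrders s = s.biUnion fun t => (linearOrders s).filter (RanksFirst s t) := by
      ext L
      simp only [Finset.mem_biUnion, Finset.mem_filter]
      refine ⟨fun hL => ?_, fun ⟨_, _, hL, _⟩ => hL⟩
      obtain ⟨t, ht, htop⟩ :=
        (mem_linearOrders.mp hL).exists_ranksFirst (Finset.card_pos.mp (h ▸ k.succ_pos))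
      exact ⟨t, ht, hL, htop⟩
    have hdisj :
        (s : Set C).PairwiseDisjoint fun t => (linearOrders s).filter (RanksFirst s t) := by
      intro t₁ h₁ t₂ h₂ hne
      refine Finset.disjoint_left.mpr fun L hL₁ hL₂ => ?_
      simp only [Finset.mem_filter, mem_linearOrders] at hL₁ hL₂
      exact hL₁.1.asymm (hL₁.2 t₂ h₂ (Ne.symm hne)) (hL₂.2 t₁ h₁ hne)
    have hfiber : ∀ t ∈ s, ((linearOrders s).filter (RanksFirst s t)).card = k.factorial := by
      intro t ht
      have := card_filter_ranksFirst_and s ht fun _ => True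
      simp only [and_true, Finset.filter_true] at this
      rw [this, ih _ (by rw [Finset.card_erase_of_mem ht, h]; rfl)]
    rw [hcover, Finset.card_biUnion hdisj, Finset.sum_congr rfl hfiber, Finset.sum_const, h,
      smul_eq_mul, Nat.factorial_succ]

theorem firstSecond_iff_ranksFirst {Y : Finset C} {a b : C} (hb : b ∈ Y) (hab : a ≠ b)
    {L : C → C → Prop} : firstSecond Y a b L ↔
      RanksFirst Y a L ∧ RanksFirst (Y.erase a) b (restrictRel (Y.erase a) L) := by
  have hb' : b ∈ Y.erase a := Finset.mem_erase.mpr ⟨hab.symm, hb⟩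
  refine and_congr_right fun _ => ⟨fun h z hz hzb => ?_, fun h z hz hza hzb => ?_⟩
  · exact ⟨h z (Finset.mem_of_mem_erase hz) (Finset.ne_of_mem_erase hz) hzb, hb', hz⟩
  · exact (h z (Finset.mem_erase.mpr ⟨hza, hz⟩) hzb).1

theorem card_filter_firstSecond {Y : Finset C} {a b : C} (ha : a ∈ Y) (hb : b ∈ Y)
    (hab : a ≠ b) :
    ((linearOrders Y).filter (firstSecond Y a b)).card = (Y.card - 2).factorial := by
  have hb' : b ∈ Y.erase a := Finset.mem_erase.mpr ⟨hab.symm, hb⟩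
  have hfirst := card_filter_ranksFirst_and (Y.erase a) hb' fun _ => True
  simp only [and_true, Finset.filter_true] at hfirst
  rw [Finset.filter_congr fun L _ => firstSecond_iff_ranksFirst hb hab,
    card_filter_ranksFirst_and Y ha, hfirst, card_linearOrders, Finset.card_erase_of_mem hb', Finset.card_erase_of_mem ha]
  rfl

def votesAbove (Y : Finset C) (x y : C) : ((C → C → Prop) → ℤ) →ₗ[ℤ] ℤ where
  toFun c := ∑ L ∈ linearOrders Y, if L x y then c L else 0
  map_add' c c' := by
    simp only [Pi.add_apply, ← Finset.sum_add_distrib]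
    exact Finset.sum_congr rfl fun L _ => by split_ifs <;> simp
  map_smul' k c := by
    simp only [Pi.smul_apply, smul_eq_mul, RingHom.id_apply, Finset.mul_sum]
    exact Finset.sum_congr rfl fun L _ => by split_ifs <;> simp

def netMargin (Y : Finset C) (x y : C) : ((C → C → Prop) → ℤ) →ₗ[ℤ] ℤ :=
  votesAbove Y x y - votesAbove Y y x

theorem netMargin_apply (Y : Finset C) (x y : C) (c : (C → C → Prop) → ℤ) :
    netMargin Y x y c = votesAbove Y x y c - votesAbove Y y x c := rfl

theorem netMargin_self (Y : Finset C) (x : C) : netMargin Y x x = 0 := sub_self _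

theorem finsum_eq_sum_linearOrders {Y : Finset C} {g : (C → C → Prop) → ℤ}
    (hg : ∀ L, g L ≠ 0 → IsStrictLinearOrderOn Y L) : ∑ᶠ L, g L = ∑ L ∈ linearOrders Y, g L :=
  finsum_eq_sum_of_support_subset _ fun L hL => by simpa using hg L hL

theorem GAProfile.margin_eq_netMargin (P : GAProfile C) (x y : C) :
    P.margin x y = netMargin P.cands x y P.count := by
  have hsupp : ∀ u v L, (if L u v then P.count L else 0) ≠ 0 → IsStrictLinearOrderOn P.cands L :=
    fun u v L hL => P.count_supp L fun h0 => hL (by simp [h0])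
  rw [GAProfile.margin, finsum_eq_sum_linearOrders (hsupp x y),
    finsum_eq_sum_linearOrders (hsupp y x)]
  rfl

/-- Transposing `x` and `y` reverses every ballot's verdict on `x` versus `y`. -/
theorem netMargin_eq_zero_of_swapRel {Y : Finset C} {x y : C} (hx : x ∈ Y) (hy : y ∈ Y)
    {c : (C → C → Prop) → ℤ} (hc : ∀ L, c (swapRel x y L) = c L) : netMargin Y x y c = 0 := by
  rw [netMargin_apply, sub_eq_zero]
  change ∑ L ∈ linearOrders Y, _ = ∑ L ∈ linearOrders Y, _
  rw [← sum_linearOrders_swapRel hx hy]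
  refine Finset.sum_congr rfl fun L _ => ?_
  rw [hc]
  simp only [swapRel, Equiv.swap_apply_left, Equiv.swap_apply_right]

theorem votesAbove_restrict (P : GAProfile C) {Z : Finset C} (hZ : Z.Nonempty)
    (hsub : Z ⊆ P.cands) {x y : C} (hx : x ∈ Z) (hy : y ∈ Z) :
    votesAbove Z x y (P.restrict Z hZ hsub).count = votesAbove P.cands x y P.count := by
  have hcount : ∀ L, (P.restrict Z hZ hsub).count L =
      ∑ L' ∈ linearOrders P.cands, if restrictRel Z L' = L then P.count L' else 0 := by
    intro L
    exact finsum_eq_sum_linearOrders fun L' hL' => P.count_supp L' fun h0 => hL' (by simp [h0])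
  change ∑ L ∈ linearOrders Z, _ = ∑ L' ∈ linearOrders P.cands, _
  calc ∑ L ∈ linearOrders Z, (if L x y then (P.restrict Z hZ hsub).count L else 0)
      = ∑ L ∈ linearOrders Z, ∑ L' ∈ linearOrders P.cands,
          if restrictRel Z L' = L then (if L x y then P.count L' else 0) else 0 := by
        refine Finset.sum_congr rfl fun L _ => ?_
        by_cases h : L x y <;> simp [h, hcount]
    _ = ∑ L' ∈ linearOrders P.cands, if restrictRel Z L' x y then P.count L' else 0 := by
        rw [Finset.sum_comm]
        refine Finset.sum_congr rfl fun L' hL' => ?_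
        rw [Finset.sum_ite_eq, if_pos]
        exact mem_linearOrders.mpr ((mem_linearOrders.mp hL').restrict hsub)
    _ = _ := Finset.sum_congr rfl fun L' _ => by simp [restrictRel, hx, hy]

theorem GAProfile.margin_restrict (P : GAProfile C) {Z : Finset C} (hZ : Z.Nonempty)
    (hsub : Z ⊆ P.cands) {x y : C} (hx : x ∈ Z) (hy : y ∈ Z) :
    (P.restrict Z hZ hsub).margin x y = P.margin x y := by
  simp only [GAProfile.margin_eq_netMargin, netMargin_apply]
  exact congrArg₂ (· - ·) (votesAbove_restrict P hZ hsub hx hy)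
    (votesAbove_restrict P hZ hsub hy hx)

theorem netMargin_swap (Y : Finset C) (x y : C) (c : (C → C → Prop) → ℤ) :
    netMargin Y y x c = -netMargin Y x y c := by
  rw [netMargin_apply, netMargin_apply, neg_sub]

theorem netMargin_allOrdersCount {Y : Finset C} {x y : C} (hx : x ∈ Y) (hy : y ∈ Y) :
    netMargin Y x y (allOrdersCount Y) = 0 :=
  netMargin_eq_zero_of_swapRel hx hy fun L => by
    simp only [allOrdersCount, isStrictLinearOrderOn_swapRel_iff hx hy]

theorem forall_mem_swap_iff {s : Finset C} {x y : C} (hx : x ∈ s) (hy : y ∈ s)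
    {p : C → Prop} : (∀ z ∈ s, p (Equiv.swap x y z)) ↔ ∀ z ∈ s, p z := by
  refine ⟨fun h z hz => ?_, fun h z hz => h _ ((swap_mem_iff hx hy z).mpr hz)⟩
  simpa using h _ ((swap_mem_iff hx hy z).mpr hz)

theorem firstSecond_swapRel {Y : Finset C} {a b x y : C} (hx : x ∈ Y) (hy : y ∈ Y)
    (hxa : x ≠ a) (hxb : x ≠ b) (hya : y ≠ a) (hyb : y ≠ b) (L : C → C → Prop) :
    firstSecond Y a b (swapRel x y L) ↔ firstSecond Y a b L := by
  have ha : Equiv.swap x y a = a := Equiv.swap_apply_of_ne_of_ne hxa.symm hya.symm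
  have hb : Equiv.swap x y b = b := Equiv.swap_apply_of_ne_of_ne hxb.symm hyb.symm
  have hinj := (Equiv.swap x y).injective
  unfold firstSecond swapRel
  rw [ha, hb, ← forall_mem_swap_iff hx hy (p := fun z => z ≠ a → L a z),
    ← forall_mem_swap_iff hx hy (p := fun z => z ≠ a → z ≠ b → L b z)]
  simp only [hinj.ne_iff' ha, hinj.ne_iff' hb]

theorem sum_blockCount {Y : Finset C} {a b : C} (ha : a ∈ Y) (hb : b ∈ Y) (hab : a ≠ b) :
    ∑ L ∈ linearOrders Y, blockCount Y a b L = (Y.card - 2).factorial := by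
  rw [← card_filter_firstSecond ha hb hab, Finset.card_filter, Nat.cast_sum]
  refine Finset.sum_congr rfl fun L hL => ?_
  simp [blockCount, mem_linearOrders.mp hL]

theorem netMargin_blockCount_of_forall {Y : Finset C} {a b x y : C} (ha : a ∈ Y) (hb : b ∈ Y)
    (hab : a ≠ b)
    (h : ∀ L, IsStrictLinearOrderOn Y L → firstSecond Y a b L → L x y) :
    netMargin Y x y (blockCount Y a b) = (Y.card - 2).factorial := by
  rw [netMargin_apply, ← sum_blockCount ha hb hab]
  change ∑ L ∈ linearOrders Y, _ - ∑ L ∈ linearOrders Y, _ = _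
  rw [← Finset.sum_sub_distrib]
  refine Finset.sum_congr rfl fun L hL => ?_
  by_cases hB : firstSecond Y a b L
  · have hxy := h L (mem_linearOrders.mp hL) hB
    simp [blockCount, hxy, (mem_linearOrders.mp hL).asymm hxy, hB, mem_linearOrders.mp hL]
  · simp [blockCount, hB]

/-- The `if` is the sign of `rank y − rank x` for the ranks `a ↦ 1`, `b ↦ 2`, others `↦ 3`: the
block is unanimous on `x` versus `y` unless both are others, where a transposition balances it. -/
theorem netMargin_blockCount {Y : Finset C} {a b x y : C} (ha : a ∈ Y) (hb : b ∈ Y)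
    (hab : a ≠ b) (hx : x ∈ Y) (hy : y ∈ Y) (hxy : x ≠ y) :
    netMargin Y x y (blockCount Y a b) = (Y.card - 2).factorial *
      (if x = a then 1 else if y = a then -1 else if x = b then 1 else if y = b then -1
        else 0) := by
  have first : ∀ {z}, z ∈ Y → z ≠ a →
      netMargin Y a z (blockCount Y a b) = (Y.card - 2).factorial :=
    fun hz hza => netMargin_blockCount_of_forall ha hb hab fun L _ hL => hL.1 _ hz hza
  have second : ∀ {z}, z ∈ Y → z ≠ a → z ≠ b →
      netMargin Y b z (blockCount Y a b) = (Y.card - 2).factorial :=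
    fun hz hza hzb => netMargin_blockCount_of_forall ha hb hab fun L _ hL => hL.2 _ hz hza hzb
  split_ifs with hxa hya hxb hyb
  · subst hxa; rw [first hy hxy.symm, mul_one]
  · subst hya; rw [netMargin_swap, first hx hxy, mul_neg_one]
  · subst hxb; rw [second hy hya hxy.symm, mul_one]
  · subst hyb; rw [netMargin_swap, second hx hxa hxy, mul_neg_one]
  · rw [mul_zero]
    exact netMargin_eq_zero_of_swapRel hx hy fun L => by
      simp only [blockCount, isStrictLinearOrderOn_swapRel_iff hx hy,
        firstSecond_swapRel hx hy hxa hxb hya hyb]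

theorem netMargin_blockCount_sub {Y : Finset C} {x y : C} (hx : x ∈ Y) (hy : y ∈ Y)
    (hxy : x ≠ y) {p : C × C} (hp : p ∈ Y ×ˢ Y) :
    netMargin Y x y (blockCount Y p.1 p.2 - blockCount Y p.2 p.1) =
      psi Y * ((if p = (x, y) then 1 else 0) - if p = (y, x) then 1 else 0) := by
  obtain ⟨a, b⟩ := p
  obtain ⟨ha, hb⟩ := Finset.mem_product.mp hp
  rcases eq_or_ne a b with rfl | hab
  · rw [sub_self, map_zero, if_neg, if_neg, sub_self, mul_zero] <;>
      simp only [Prod.mk.injEq] <;> rintro ⟨rfl, rfl⟩ <;> exact hxy rfl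
  rw [map_sub, netMargin_blockCount ha hb hab hx hy hxy,
    netMargin_blockCount hb ha hab.symm hx hy hxy, psi]
  split_ifs <;> simp_all <;> ring

theorem netMargin_allOrders_add_sum {Y V : Finset C} (hV : V ⊆ Y) (m : ℤ) (k : C × C → ℤ)
    {x y : C} (hx : x ∈ V) (hy : y ∈ V) :
    netMargin Y x y (m • allOrdersCount Y +
        ∑ p ∈ V ×ˢ V, k p • (blockCount Y p.1 p.2 - blockCount Y p.2 p.1)) =
      psi Y * (k (x, y) - k (y, x)) := by
  rcases eq_or_ne x y with rfl | hxy
  · rw [netMargin_self, sub_self, mul_zero, LinearMap.zero_apply]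
  have hpY : ∀ p ∈ V ×ˢ V, p ∈ Y ×ˢ Y := fun p hp => Finset.product_subset_product hV hV hp
  rw [map_add, map_zsmul, netMargin_allOrdersCount (hV hx) (hV hy), smul_zero, zero_add,
    map_sum, Finset.sum_congr rfl fun p hp => by
      rw [map_zsmul, netMargin_blockCount_sub (hV hx) (hV hy) hxy (hpY p hp)]]
  simp only [smul_eq_mul, mul_sub, mul_ite, mul_one, mul_zero, Finset.sum_sub_distrib,
    Finset.sum_ite_eq', Finset.mem_product, hx, hy, and_self, if_true]
  ring

theorem bigLCount_eq (Y : Finset C) (T : WeakTournament C) :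
    bigLCount Y T = (1 : ℤ) • allOrdersCount Y + ∑ p ∈ T.verts ×ˢ T.verts,
      (if T.edge p.1 p.2 then 1 else 0 : ℤ) • (blockCount Y p.1 p.2 - blockCount Y p.2 p.1) := by
  funext L
  simp only [bigLCount, one_smul, ite_smul, zero_smul, Pi.add_apply, Finset.sum_apply, ite_apply,
    Pi.sub_apply, Pi.zero_apply]

theorem bigLWCount_eq (Y : Finset C) (m : ℕ) (T : WeightedWeakTournament C) :
    bigLWCount Y m T = (m : ℤ) • allOrdersCount Y + ∑ p ∈ T.verts ×ˢ T.verts,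
      (if T.edge p.1 p.2 then T.wt p.1 p.2 / psi Y else 0) •
        (blockCount Y p.1 p.2 - blockCount Y p.2 p.1) := by
  funext L
  simp only [bigLWCount, ite_smul, zero_smul, Pi.add_apply, Pi.smul_apply, smul_eq_mul,
    Finset.sum_apply, ite_apply, Pi.sub_apply, Pi.zero_apply]

theorem margin_profileRep {Y : Finset C} (T : WeakTournament C) (hsub : T.verts ⊆ Y)
    {x y : C} (hx : x ∈ T.verts) (hy : y ∈ T.verts) :
    (profileRep Y T hsub).margin x y =
      psi Y * ((if T.edge x y then 1 else 0) - if T.edge y x then 1 else 0) := by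
  refine (GAProfile.margin_restrict (bigL Y T hsub) _ hsub hx hy).trans ?_
  rw [GAProfile.margin_eq_netMargin]
  exact (congrArg _ (bigLCount_eq Y T)).trans (netMargin_allOrders_add_sum hsub _ _ hx hy)

theorem margin_profileRepW {Y : Finset C} (m : ℕ) (T : WeightedWeakTournament C)
    (hsub : T.verts ⊆ Y) {x y : C} (hx : x ∈ T.verts) (hy : y ∈ T.verts) :
    (profileRepW Y m T hsub).margin x y = psi Y *
      ((if T.edge x y then T.wt x y / psi Y else 0) -
        if T.edge y x then T.wt y x / psi Y else 0) := by
  refine (GAProfile.margin_restrict (bigLW Y m T hsub) _ hsub hx hy).trans ?_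
  rw [GAProfile.margin_eq_netMargin]
  exact (congrArg _ (bigLWCount_eq Y m T)).trans (netMargin_allOrders_add_sum hsub _ _ hx hy)

theorem WeakTournament.ext {T T' : WeakTournament C} (hv : T.verts = T'.verts)
    (he : T.edge = T'.edge) : T = T' := by
  cases T; cases T'; cases hv; cases he; rfl

theorem WeightedWeakTournament.ext {T T' : WeightedWeakTournament C} (hv : T.verts = T'.verts)
    (he : T.edge = T'.edge) (hw : T.wt = T'.wt) : T = T' := by
  cases T; cases T'; cases hv; cases he; cases hw; rfl

namespace GAProfile

theorem maj_eq_of_margin_pos_iff {Q : GAProfile C} {T : WeakTournament C}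
    (hc : Q.cands = T.verts) (h : ∀ x ∈ T.verts, ∀ y ∈ T.verts, 0 < Q.margin x y ↔ T.edge x y) :
    Q.maj = T := by
  refine WeakTournament.ext hc (funext₂ fun x y => propext ?_)
  change 0 < Q.margin x y ∧ x ∈ Q.cands ∧ y ∈ Q.cands ↔ T.edge x y
  rw [hc]
  exact ⟨fun ⟨hpos, hx, hy⟩ => (h x hx y hy).mp hpos,
    fun he => ⟨(h _ (T.edge_dom x y he).1 _ (T.edge_dom x y he).2).mpr he, T.edge_dom x y he⟩⟩

theorem marg_eq_scale_of_margin {Q P : GAProfile C} (hc : Q.cands = P.cands) {k : ℤ} (hk : 0 < k)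
    (h : ∀ x ∈ P.cands, ∀ y ∈ P.cands, Q.margin x y = k * P.margin x y) :
    Q.marg = WeightedWeakTournament.scale k hk P.marg := by
  have hedge : ∀ x y, (0 < Q.margin x y ∧ x ∈ Q.cands ∧ y ∈ Q.cands) ↔
      (0 < P.margin x y ∧ x ∈ P.cands ∧ y ∈ P.cands) := by
    intro x y
    rw [hc]
    refine and_congr_left fun ⟨hx, hy⟩ => ?_
    rw [h x hx y hy, mul_pos_iff_of_pos_left hk]
  refine WeightedWeakTournament.ext hc (funext₂ fun x y => propext (hedge x y))
    (funext₂ fun x y => ?_)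
  change (if _ then _ else _) = k * (if _ then _ else _)
  by_cases he : 0 < P.margin x y ∧ x ∈ P.cands ∧ y ∈ P.cands
  · rw [if_pos ((hedge x y).mpr he), if_pos he, h x he.2.1 y he.2.2]
  · rw [if_neg (mt (hedge x y).mp he), if_neg he, mul_zero]

theorem marg_wt_sub_marg_wt (P : GAProfile C) (x y : C) (hx : x ∈ P.cands) (hy : y ∈ P.cands) :
    P.marg.wt x y - P.marg.wt y x = P.margin x y := by
  change (if _ then _ else _) - (if _ then _ else _) = _
  rw [P.margin_neg x y]
  split_ifs <;> simp_all <;> omega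

end GAProfile

theorem maj_profileRep (Y : Finset C) (T : WeakTournament C) (hsub : T.verts ⊆ Y) :
    (profileRep Y T hsub).maj = T := by
  refine GAProfile.maj_eq_of_margin_pos_iff rfl fun x hx y hy => ?_
  rw [margin_profileRep T hsub hx hy, mul_pos_iff_of_pos_left (psi_pos Y)]
  by_cases hxy : T.edge x y
  · simp [hxy, T.edge_asymm x y hxy]
  · by_cases hyx : T.edge y x <;> simp [hxy, hyx]

theorem marg_profileRepW_scale_marg (Y : Finset C) (m : ℕ) (P : GAProfile C)
    (hsub : (WeightedWeakTournament.scale (psi Y) (psi_pos Y) P.marg).verts ⊆ Y) :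
    (profileRepW Y m (WeightedWeakTournament.scale (psi Y) (psi_pos Y) P.marg) hsub).marg =
      WeightedWeakTournament.scale (psi Y) (psi_pos Y) P.marg := by
  refine GAProfile.marg_eq_scale_of_margin (by rfl) (psi_pos Y) fun x hx y hy => ?_
  rw [margin_profileRepW m _ hsub hx hy, ← P.marg_wt_sub_marg_wt x y hx hy]
  have hwt : ∀ u v, (if P.marg.edge u v then psi Y * P.marg.wt u v / psi Y else 0) =
      P.marg.wt u v := fun u v => by
    split_ifs with he
    · exact Int.mul_ediv_cancel_left _ (psi_pos Y).ne'
    · exact (P.marg.wt_eq_zero u v he).symm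
  exact congrArg _ (congrArg₂ (· - ·) (hwt x y) (hwt y x))

theorem majProj_winners (F : AnonVotingMethod C) (Y : Finset C) {P : GAProfile C}
    (h : P.maj.verts ⊆ Y) : (majProj F Y).winners P = F.winners (profileRep Y P.maj h) :=
  dif_pos h

theorem pairProj_winners (F : AnonVotingMethod C) (Y : Finset C) (m : ℕ) {P : GAProfile C}
    (h : (WeightedWeakTournament.scale (psi Y) (psi_pos Y) P.marg).verts ⊆ Y) :
    (pairProj F Y m).winners P =
      F.winners (profileRepW Y m (WeightedWeakTournament.scale (psi Y) (psi_pos Y) P.marg) h) :=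
  dif_pos h

theorem AnonVotingMethod.Satisfies.of_forall_exists {F G : AnonVotingMethod C} {n : ℕ}
    {Ax : Set (Fin n → GAProfile C × Finset C)} (hF : F.Satisfies Ax)
    (r : GAProfile C → GAProfile C → Prop)
    (hAx : ∀ Pv Qv : Fin n → GAProfile C, (∀ i, r (Pv i) (Qv i)) →
      ∀ Xv : Fin n → Finset C, (∀ i, Xv i ⊆ (Pv i).cands) →
        (fun i => (Qv i, Xv i)) ∈ Ax → (fun i => (Pv i, Xv i)) ∈ Ax)
    (hG : ∀ P ∈ G.dom, ∃ Q ∈ F.dom, r P Q ∧ G.winners P = F.winners Q) : G.Satisfies Ax := by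
  intro f hf
  choose Q hQ hr hwin using fun i => hG _ (hf i).1
  have hsub : ∀ i, (f i).2 ⊆ (f i).1.cands := fun i => (hf i).2 ▸ G.winners_sub _ (hf i).1
  refine hAx (fun i => (f i).1) Q hr (fun i => (f i).2) hsub (hF _ fun i => ⟨hQ i, ?_⟩)
  exact (hf i).2.trans (hwin i)

end

theorem projections_preserve_axioms_general (C : Type) (F : AnonVotingMethod C)
    (n : ℕ) (Ax : Set (Fin n → GAProfile C × Finset C))
    (Y : Finset C) (m : ℕ) :
    (IsMajoritarianAx Ax → F.Satisfies Ax → (majProj F Y).Satisfies Ax) ∧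
    (IsHomogeneouslyPairwiseAx Ax → F.Satisfies Ax → (pairProj F Y m).Satisfies Ax) := by
  constructor
  · intro hMaj hF
    refine hF.of_forall_exists (fun P Q => P.maj = Q.maj)
      (fun Pv Qv h Xv hX => (hMaj Pv Qv h Xv hX).mpr) ?_
    rintro P ⟨-, hsub, hdom⟩
    exact ⟨_, hdom, (maj_profileRep Y P.maj hsub).symm, majProj_winners F Y hsub⟩
  · intro hPair hF
    refine hF.of_forall_exists
      (fun P Q => WeightedWeakTournament.scale (psi Y) (psi_pos Y) P.marg = Q.marg)
      (fun Pv Qv h Xv hX => (hPair Pv Qv _ _ h Xv hX).mpr) ?_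
    rintro P ⟨-, -, hsub, hdom⟩
    exact ⟨_, hdom, (marg_profileRepW_scale_marg Y m P hsub).symm, pairProj_winners F Y m hsub⟩

/-- Let `F` be an anonymous voting method. For any majoritarian
(resp. homogeneously pairwise) universal axiom `Ax`: if `F` satisfies `Ax`, then the
majoritarian projection `F_{maj,Y}` (resp. the pairwise projection `F_{pair,Y,m}`)
satisfies `Ax`, for any finite `Y ⊆ 𝒳` and `m ∈ ℤ⁺`. -/
theorem projections_preserve_axioms (C : Type) [Infinite C] (F : AnonVotingMethod C)
    (n : ℕ) (Ax : Set (Fin n → GAProfile C × Finset C))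
    (hAx : ∀ f ∈ Ax, ∀ i, (f i).2 ⊆ (f i).1.cands)
    (Y : Finset C) (m : ℕ) (hm : 0 < m) :
    (IsMajoritarianAx Ax → F.Satisfies Ax → (majProj F Y).Satisfies Ax) ∧
    (IsHomogeneouslyPairwiseAx Ax → F.Satisfies Ax → (pairProj F Y m).Satisfies Ax) :=
  projections_preserve_axioms_general C F n Ax Y m
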